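/- arXiv:1611.06833 — 4 statements merged into one kernel-verified Lean document; each statement's English description precedes it below -/
import Mathlib

section
/- If all electors in S have the same representation r k = n_i / w_i where w_i = ∑_{k∈S} u k and n_i ∈ ℕ, then 2 * φ_i = (2 * n_i + 1) / w_i, where 2 * φ_i = w_i * ρ_i^2 - ∑_{k∈S} u k * (r k)^2 and ρ_i = ((∑_{k∈S} u k * r k) + 1)/w_i. -/
open Finset

theorem Finset.sum_mul_of_forall_eq {ι R : Type*} [NonUnitalNonAssocSemiring R]
    (s : Finset ι) (u r : ι → R) (c : R) (hr : ∀ k ∈ s, r k = c) :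
    ∑ k ∈ s, u k * r k = (∑ k ∈ s, u k) * c := by
  rw [Finset.sum_mul]
  exact sum_congr rfl fun k hk => by rw [hr k hk]

-- `(m + 1)² - m² = 2m + 1`, rescaled by the total weight `w`.
theorem mul_add_one_div_sq_sub_mul_div_sq {F : Type*} [Field F] {w : F} (hw : w ≠ 0) (m : F) :
    w * ((m + 1) / w) ^ 2 - w * (m / w) ^ 2 = (2 * m + 1) / w := by
  field_simp
  ring

theorem sainte_lague_value
    {K : Type*} [Fintype K] [Nonempty K]
    (u r : K → ℝ) (nᵢ : ℕ)
    (hu : ∀ k, 0 < u k)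
    (hr : ∀ k, r k = (nᵢ : ℝ) / (∑ k, u k))
    (ρ : ℝ) (hρ : ρ = ((∑ k, u k * r k) + 1) / (∑ k, u k)) :
    (∑ k, u k) * ρ ^ 2 - ∑ k, u k * (r k) ^ 2
      = (2 * (nᵢ : ℝ) + 1) / (∑ k, u k) := by
  have hw : ∑ k, u k ≠ 0 := (sum_pos (fun k _ => hu k) univ_nonempty).ne'
  have h_mean : ∑ k, u k * r k = nᵢ := by
    rw [sum_mul_of_forall_eq univ u r _ fun k _ => hr k, mul_div_cancel₀ _ hw]
  have h_sq : ∑ k, u k * r k ^ 2 = (∑ k, u k) * ((nᵢ : ℝ) / ∑ k, u k) ^ 2 :=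
    sum_mul_of_forall_eq univ u (fun k => r k ^ 2) _ fun k _ => by rw [hr k]
  rw [hρ, h_mean, h_sq]
  exact mul_add_one_div_sq_sub_mul_div_sq hw _
end

section
/- Let u : S → ℝ positive, r : S → ℝ, w = ∑_{k∈S} u k, ρ = ((∑_{k∈S} u k r k)+1)/w. If r k ≤ ρ for all k ∈ S, then the distribution x k = ρ - r k satisfies all constraints: x k ≥ 0, ∑_{k∈S} u k x k = 1, and it minimizes ∑ u k (r k + x k)² among nonnegative feasible distributions. -/
open Finset

/-
The candidate x = ρ - r satisfies r + x ≡ ρ, and ρ is chosen so that every feasible y has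
∑ u (r + y) = ∑ u r + 1 = ρ ∑ u, i.e. the u-weighted mean of r + y is ρ. Minimality is then the
nonnegativity of a weighted variance: ∑ u (r + y)² = ∑ u ρ² + ∑ u (r + y - ρ)².
-/

section WeightedSums

variable {ι : Type*} (s : Finset ι) (u : ι → ℝ)

theorem sum_mul_sq_le_of_sum_mul_sub_eq_zero (hu : ∀ k ∈ s, 0 ≤ u k) (z : ι → ℝ) (c : ℝ)
    (hz : ∑ k ∈ s, u k * (z k - c) = 0) :
    ∑ k ∈ s, u k * c ^ 2 ≤ ∑ k ∈ s, u k * z k ^ 2 := by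
  have hsplit : ∑ k ∈ s, u k * z k ^ 2 =
      ∑ k ∈ s, u k * c ^ 2 + 2 * c * ∑ k ∈ s, u k * (z k - c) +
        ∑ k ∈ s, u k * (z k - c) ^ 2 := by
    rw [mul_sum, ← sum_add_distrib, ← sum_add_distrib]
    exact sum_congr rfl fun k _ => by ring
  have hvar : 0 ≤ ∑ k ∈ s, u k * (z k - c) ^ 2 :=
    sum_nonneg fun k hk => mul_nonneg (hu k hk) (sq_nonneg _)
  rw [hsplit, hz]
  linarith

variable (r : ι → ℝ) {ρ : ℝ}

theorem sum_mul_sub_eq_one (hρ : ρ * ∑ k ∈ s, u k = ∑ k ∈ s, u k * r k + 1) :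
    ∑ k ∈ s, u k * (ρ - r k) = 1 := by
  simp only [mul_sub, sum_sub_distrib, ← sum_mul]
  linear_combination hρ

theorem sum_mul_add_sub_eq_zero (hρ : ρ * ∑ k ∈ s, u k = ∑ k ∈ s, u k * r k + 1)
    {y : ι → ℝ} (hy : ∑ k ∈ s, u k * y k = 1) :
    ∑ k ∈ s, u k * (r k + y k - ρ) = 0 := by
  simp only [mul_sub, mul_add, sum_sub_distrib, sum_add_distrib, ← sum_mul]
  linear_combination hy - hρ

end WeightedSums

theorem positivity_condition_sufficient
    {K : Type*} [Fintype K] [Nonempty K]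
    (u r : K → ℝ)
    (hu : ∀ k, 0 < u k)
    (ρ : ℝ) (hρ : ρ = ((∑ k, u k * r k) + 1) / (∑ k, u k))
    (hpos : ∀ k, r k ≤ ρ) :
    (∀ k, 0 ≤ ρ - r k) ∧
    (∑ k, u k * (ρ - r k) = 1) ∧
    (∀ y : K → ℝ, (∀ k, 0 ≤ y k) → (∑ k, u k * y k = 1) →
      (∑ k, u k * (r k + (ρ - r k)) ^ 2) ≤ ∑ k, u k * (r k + y k) ^ 2) := by
  have hw : 0 < ∑ k, u k := sum_pos (fun k _ => hu k) univ_nonempty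
  have hρw : ρ * ∑ k, u k = ∑ k, u k * r k + 1 := (eq_div_iff hw.ne').mp hρ
  refine ⟨fun k => sub_nonneg.mpr (hpos k), sum_mul_sub_eq_one _ _ _ hρw, fun y _ hy => ?_⟩
  simp only [add_sub_cancel]
  exact sum_mul_sq_le_of_sum_mul_sub_eq_zero _ _ (fun k _ => (hu k).le) _ _
    (sum_mul_add_sub_eq_zero _ _ _ hρw hy)
end

section
/- Suppose x minimizes φ(x) = (1/2)∑_{k∈S} u k (2 r k x k + x k²) subject to x k ≥ 0 and ∑ u k x k = 1. Then there exists ρ such that for every k ∈ S: if x k > 0 then r k + x k = ρ, and if x k = 0 then r k ≥ ρ. -/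
/-!
Moving a `u`-weighted amount `ε` of mass from a coordinate `i` with `x i > 0` to any coordinate
`j` keeps `x` feasible and changes `2φ` by `2ε ((r j + x j) - (r i + x i)) + O(ε²)`.
Minimality therefore forces `r i + x i ≤ r j + x j`: the marginal cost `r k + x k` is minimal,
hence constant, on the support of `x`, and the common value `ρ` bounds `r k = r k + x k` off it.
-/

open Finset Filter Topology

section

variable {K : Type*} [Fintype K]

def quadCost (u r y : K → ℝ) : ℝ := ∑ k, u k * (2 * r k * y k + y k ^ 2)

def weightedSimplex (u : K → ℝ) : Set (K → ℝ) := {y | (∀ k, 0 ≤ y k) ∧ ∑ k, u k * y k = 1}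

theorem quadCost_add (u r x d : K → ℝ) :
    quadCost u r (x + d) = quadCost u r x + ∑ k, u k * d k * (2 * (r k + x k) + d k) := by
  simp only [quadCost, Pi.add_apply, ← sum_add_distrib]
  exact sum_congr rfl fun k _ => by ring

variable [DecidableEq K]

theorem sum_single_sub_single {G M : Type*} [AddGroup G] [AddCommMonoid M] {i j : K}
    (hij : i ≠ j) (a b : G) (F : K → G → M) (hF : ∀ k, F k 0 = 0) :
    ∑ k, F k ((Pi.single j a - Pi.single i b : K → G) k) = F j a + F i (-b) := by
  rw [sum_eq_add j i hij.symm (fun k _ hk => by simp [hk.1, hk.2, hF]) (by simp) (by simp)]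
  simp [hij, hij.symm]

noncomputable def massTransfer (u : K → ℝ) (i j : K) (ε : ℝ) : K → ℝ :=
  Pi.single j (ε / u j) - Pi.single i (ε / u i)

variable {u : K → ℝ} {i j : K}

theorem massTransfer_mem_weightedSimplex (hu : ∀ k, 0 < u k) (hij : i ≠ j) {x : K → ℝ}
    (hx : x ∈ weightedSimplex u) {ε : ℝ} (hε : 0 ≤ ε) (hεi : ε ≤ u i * x i) :
    x + massTransfer u i j ε ∈ weightedSimplex u := by
  refine ⟨fun k => ?_, ?_⟩
  · rcases eq_or_ne k i with rfl | hki
    · have : ε / u k ≤ x k := by rw [div_le_iff₀ (hu k)]; linarith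
      simp only [massTransfer, Pi.add_apply, Pi.sub_apply, Pi.single_eq_same,
        Pi.single_eq_of_ne hij]
      linarith
    · have := hx.1 k
      rcases eq_or_ne k j with rfl | hkj
      · have := div_nonneg hε (hu k).le
        simp only [massTransfer, Pi.add_apply, Pi.sub_apply, Pi.single_eq_same,
          Pi.single_eq_of_ne hki]
        linarith
      · simpa [massTransfer, hki, hkj]
  · have hshift : ∑ k, u k * massTransfer u i j ε k = 0 := by
      rw [massTransfer, sum_single_sub_single hij _ _ (fun k t => u k * t) (fun k => mul_zero _)]
      field_simp [(hu i).ne', (hu j).ne']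
      ring
    simp only [Pi.add_apply, mul_add, sum_add_distrib, hshift, add_zero, hx.2]

theorem quadCost_add_massTransfer (hu : ∀ k, 0 < u k) (hij : i ≠ j) (r x : K → ℝ) (ε : ℝ) :
    quadCost u r (x + massTransfer u i j ε) =
      quadCost u r x + 2 * ((r j + x j) - (r i + x i)) * ε + (1 / u j + 1 / u i) * ε ^ 2 := by
  rw [quadCost_add, massTransfer,
    sum_single_sub_single hij _ _ (fun k t => u k * t * (2 * (r k + x k) + t)) (by simp)]
  field_simp [(hu i).ne', (hu j).ne']
  ring

end

theorem nonneg_of_forall_mem_Ioc {a c δ : ℝ} (hδ : 0 < δ)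
    (h : ∀ ε ∈ Set.Ioc 0 δ, 0 ≤ a * ε + c * ε ^ 2) : 0 ≤ a := by
  have hlim : Tendsto (fun ε : ℝ => a + c * ε) (𝓝[>] 0) (𝓝 a) := by
    have : Tendsto (fun ε : ℝ => a + c * ε) (𝓝 0) (𝓝 (a + c * 0)) :=
      ((continuous_const_mul c).const_add a).tendsto 0
    simpa using this.mono_left nhdsWithin_le_nhds
  refine ge_of_tendsto hlim ?_
  filter_upwards [Ioc_mem_nhdsGT hδ] with ε hε
  exact nonneg_of_mul_nonneg_right (by linarith [h ε hε]) hε.1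

theorem marginalCost_le_of_isMinOn {K : Type*} [Fintype K] {u r x : K → ℝ}
    (hu : ∀ k, 0 < u k) (hx : x ∈ weightedSimplex u)
    (hmin : IsMinOn (quadCost u r) (weightedSimplex u) x) (i j : K) (hi : 0 < x i) :
    r i + x i ≤ r j + x j := by
  classical
  rcases eq_or_ne i j with rfl | hij
  · exact le_rfl
  have hfirst : ∀ ε ∈ Set.Ioc 0 (u i * x i),
      0 ≤ 2 * ((r j + x j) - (r i + x i)) * ε + (1 / u j + 1 / u i) * ε ^ 2 := by
    intro ε hε
    have := isMinOn_iff.mp hmin _ (massTransfer_mem_weightedSimplex hu hij hx hε.1.le hε.2)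
    rw [quadCost_add_massTransfer hu hij] at this
    linarith
  linarith [nonneg_of_forall_mem_Ioc (mul_pos (hu i) hi) hfirst]

theorem kkt_characterization_general
    {K : Type*} [Fintype K]
    (u r : K → ℝ)
    (hu : ∀ k, 0 < u k)
    (x : K → ℝ) (hxpos : ∀ k, 0 ≤ x k) (hx : ∑ k, u k * x k = 1)
    (hmin : ∀ y : K → ℝ, (∀ k, 0 ≤ y k) → (∑ k, u k * y k = 1) →
      (1 / 2) * (∑ k, u k * (2 * r k * x k + (x k) ^ 2))
        ≤ (1 / 2) * ∑ k, u k * (2 * r k * y k + (y k) ^ 2)) :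
    ∃ ρ : ℝ, ∀ k, (0 < x k → r k + x k = ρ) ∧ (x k = 0 → ρ ≤ r k) := by
  have hminOn : IsMinOn (quadCost u r) (weightedSimplex u) x :=
    isMinOn_iff.mpr fun y hy => by unfold quadCost; linarith [hmin y hy.1 hy.2]
  have hle := marginalCost_le_of_isMinOn hu ⟨hxpos, hx⟩ hminOn
  obtain ⟨k₀, hk₀⟩ : ∃ k₀, 0 < x k₀ := by
    by_contra! h
    simp [le_antisymm (h _) (hxpos _)] at hx
  refine ⟨r k₀ + x k₀, fun k => ⟨fun hk => (hle k k₀ hk).antisymm (hle k₀ k hk₀), fun hk => ?_⟩⟩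
  simpa [hk] using hle k₀ k hk₀

theorem kkt_characterization
    {K : Type*} [Fintype K] [Nonempty K]
    (u r : K → ℝ)
    (hu : ∀ k, 0 < u k)
    (x : K → ℝ) (hxpos : ∀ k, 0 ≤ x k) (hx : ∑ k, u k * x k = 1)
    (hmin : ∀ y : K → ℝ, (∀ k, 0 ≤ y k) → (∑ k, u k * y k = 1) →
      (1 / 2) * (∑ k, u k * (2 * r k * x k + (x k) ^ 2))
        ≤ (1 / 2) * ∑ k, u k * (2 * r k * y k + (y k) ^ 2)) :
    ∃ ρ : ℝ, ∀ k, (0 < x k → r k + x k = ρ) ∧ (x k = 0 → ρ ≤ r k) :=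
  kkt_characterization_general u r hu x hxpos hx hmin
end

section
/- Let S' ⊆ S be the set of k with r k < ρ', where ρ' = ((∑_{k∈S'} u k r k) + 1)/(∑_{k∈S'} u k). If the distribution x defined by x k = ρ' - r k for k ∈ S' and x k = 0 otherwise satisfies the KKT conditions (r k ≥ ρ' for k ∉ S'), then x is the unique minimizer of φ over nonnegative feasible distributions. -/
open Finset

/-!
Write `φ(y) - φ(x)` as the first-order term `∑ u (r + x) (y - x)` plus the strictly positive
quadratic term `½ ∑ u (y - x)²`. Since `y` and `x` have the same mass `∑ u y = ∑ u x`, the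
first-order term equals `∑ u (r + x - ρ') (y - x)`, and the KKT conditions make each summand
nonnegative: it vanishes on `S'`, where `r + x = ρ'`, and off `S'` it is `u (r - ρ') y ≥ 0`.
Hence `φ(x) ≤ φ(y)`, with equality only if the quadratic term vanishes, i.e. `y = x`.
-/

section QuadraticCost

variable {K : Type*} [Fintype K]

noncomputable def quadraticCost (u r y : K → ℝ) : ℝ :=
  (1 / 2) * ∑ k, u k * (2 * r k * y k + y k ^ 2)

lemma quadraticCost_sub (u r x y : K → ℝ) :
    quadraticCost u r y - quadraticCost u r x =
      ∑ k, u k * (r k + x k) * (y k - x k) + (1 / 2) * ∑ k, u k * (y k - x k) ^ 2 := by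
  simp only [quadraticCost, mul_sum, ← sum_sub_distrib, ← sum_add_distrib]
  exact sum_congr rfl fun k _ => by ring

lemma sum_gradient_mul_sub_nonneg {u r x y : K → ℝ} {ρ : ℝ} (hu : ∀ k, 0 ≤ u k)
    (hkkt : ∀ k, r k + x k = ρ ∨ (x k = 0 ∧ ρ ≤ r k)) (hy : ∀ k, 0 ≤ y k)
    (hsum : ∑ k, u k * y k = ∑ k, u k * x k) :
    0 ≤ ∑ k, u k * (r k + x k) * (y k - x k) := by
  have hshift : ∑ k, u k * (r k + x k) * (y k - x k) =
      ∑ k, u k * (r k + x k - ρ) * (y k - x k) + ρ * (∑ k, u k * y k - ∑ k, u k * x k) := by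
    simp only [mul_sub, mul_sum, ← sum_sub_distrib, ← sum_add_distrib]
    exact sum_congr rfl fun k _ => by ring
  rw [hshift, hsum, sub_self, mul_zero, add_zero]
  refine sum_nonneg fun k _ => ?_
  rcases hkkt k with hflat | ⟨hzero, hρ⟩
  · simp [hflat]
  · rw [hzero]
    exact mul_nonneg (mul_nonneg (hu k) (by linarith)) (by linarith [hy k])

lemma eq_of_sum_mul_sq_sub_eq_zero {u x y : K → ℝ} (hu : ∀ k, 0 < u k)
    (h : ∑ k, u k * (y k - x k) ^ 2 = 0) : y = x := by
  rw [sum_eq_zero_iff_of_nonneg fun k _ => mul_nonneg (hu k).le (sq_nonneg _)] at h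
  funext k
  have hsq := h k (mem_univ k)
  rw [mul_eq_zero, or_iff_right (hu k).ne', sq_eq_zero_iff, sub_eq_zero] at hsq
  exact hsq

theorem quadraticCost_le_and_eq_of_kkt {u r x y : K → ℝ} {ρ : ℝ} (hu : ∀ k, 0 < u k)
    (hkkt : ∀ k, r k + x k = ρ ∨ (x k = 0 ∧ ρ ≤ r k)) (hy : ∀ k, 0 ≤ y k)
    (hsum : ∑ k, u k * y k = ∑ k, u k * x k) :
    quadraticCost u r x ≤ quadraticCost u r y ∧
      (quadraticCost u r y = quadraticCost u r x → y = x) := by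
  have hdiff := quadraticCost_sub u r x y
  have hgrad := sum_gradient_mul_sub_nonneg (fun k => (hu k).le) hkkt hy hsum
  have hquad : 0 ≤ ∑ k, u k * (y k - x k) ^ 2 :=
    sum_nonneg fun k _ => mul_nonneg (hu k).le (sq_nonneg _)
  refine ⟨by linarith, fun heq => eq_of_sum_mul_sq_sub_eq_zero hu ?_⟩
  linarith

end QuadraticCost

section WaterFilling

variable {K : Type*} [DecidableEq K]

def waterFill (S : Finset K) (ρ : ℝ) (r : K → ℝ) (k : K) : ℝ :=
  if k ∈ S then ρ - r k else 0

lemma waterFill_nonneg {S : Finset K} {ρ : ℝ} {r : K → ℝ} (hmem : ∀ k ∈ S, r k < ρ) (k : K) :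
    0 ≤ waterFill S ρ r k := by
  unfold waterFill
  split_ifs with hk
  · linarith [hmem k hk]
  · rfl

lemma waterFill_kkt {S : Finset K} {ρ : ℝ} {r : K → ℝ} (hout : ∀ k ∉ S, ρ ≤ r k) (k : K) :
    r k + waterFill S ρ r k = ρ ∨ (waterFill S ρ r k = 0 ∧ ρ ≤ r k) := by
  unfold waterFill
  split_ifs with hk
  · exact Or.inl (by ring)
  · exact Or.inr ⟨rfl, hout k hk⟩

lemma sum_mul_waterFill [Fintype K] (S : Finset K) (ρ : ℝ) (u r : K → ℝ) :
    ∑ k, u k * waterFill S ρ r k = ρ * ∑ k ∈ S, u k - ∑ k ∈ S, u k * r k := by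
  simp only [waterFill, mul_ite, mul_zero, sum_ite_mem, univ_inter, mul_sum, ← sum_sub_distrib]
  exact sum_congr rfl fun k _ => by ring

end WaterFilling

theorem kkt_sufficiency_general
    {K : Type*} [Fintype K] [DecidableEq K]
    (u r : K → ℝ)
    (hu : ∀ k, 0 < u k)
    (S' : Finset K) (hS'ne : S'.Nonempty)
    (ρ' : ℝ) (hρ' : ρ' = ((∑ k ∈ S', u k * r k) + 1) / (∑ k ∈ S', u k))
    (hmem : ∀ k ∈ S', r k < ρ')
    (hKKT : ∀ k ∉ S', ρ' ≤ r k)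
    (x : K → ℝ) (hxdef : ∀ k, x k = if k ∈ S' then ρ' - r k else 0) :
    (∀ k, 0 ≤ x k) ∧ (∑ k, u k * x k = 1) ∧
    (∀ y : K → ℝ, (∀ k, 0 ≤ y k) → (∑ k, u k * y k = 1) →
      (1 / 2) * (∑ k, u k * (2 * r k * x k + (x k) ^ 2))
        ≤ (1 / 2) * (∑ k, u k * (2 * r k * y k + (y k) ^ 2)) ∧
      ((1 / 2) * (∑ k, u k * (2 * r k * y k + (y k) ^ 2))
          = (1 / 2) * (∑ k, u k * (2 * r k * x k + (x k) ^ 2)) → y = x)) := by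
  obtain rfl : x = waterFill S' ρ' r := funext hxdef
  have hmass : 0 < ∑ k ∈ S', u k := sum_pos (fun k _ => hu k) hS'ne
  have hxsum : ∑ k, u k * waterFill S' ρ' r k = 1 := by
    rw [sum_mul_waterFill, hρ']
    field_simp
    ring
  exact ⟨waterFill_nonneg hmem, hxsum, fun y hy hysum =>
    quadraticCost_le_and_eq_of_kkt hu (waterFill_kkt hKKT) hy (hysum.trans hxsum.symm)⟩

theorem kkt_sufficiency
    {K : Type*} [Fintype K] [Nonempty K] [DecidableEq K]
    (u r : K → ℝ)
    (hu : ∀ k, 0 < u k)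
    (S' : Finset K) (hS'ne : S'.Nonempty)
    (ρ' : ℝ) (hρ' : ρ' = ((∑ k ∈ S', u k * r k) + 1) / (∑ k ∈ S', u k))
    (hmem : ∀ k ∈ S', r k < ρ')
    (hKKT : ∀ k ∉ S', ρ' ≤ r k)
    (x : K → ℝ) (hxdef : ∀ k, x k = if k ∈ S' then ρ' - r k else 0) :
    (∀ k, 0 ≤ x k) ∧ (∑ k, u k * x k = 1) ∧
    (∀ y : K → ℝ, (∀ k, 0 ≤ y k) → (∑ k, u k * y k = 1) →
      (1 / 2) * (∑ k, u k * (2 * r k * x k + (x k) ^ 2))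
        ≤ (1 / 2) * (∑ k, u k * (2 * r k * y k + (y k) ^ 2)) ∧
      ((1 / 2) * (∑ k, u k * (2 * r k * y k + (y k) ^ 2))
          = (1 / 2) * (∑ k, u k * (2 * r k * x k + (x k) ^ 2)) → y = x)) :=
  kkt_sufficiency_general u r hu S' hS'ne ρ' hρ' hmem hKKT x hxdef
end
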